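/- arXiv:2601.22003 — 4 statements merged into one kernel-verified Lean document; each statement's English description precedes it below -/
import Mathlib

section
/- Let π₀,…,π_k be finite measures on ℝ^d with positive unnormalised Lebesgue densities Π₀,…,Π_k (each with 0 < ∫ Π_n(x) dx < ∞). Let K₁,…,K_k and L₀,…,L_{k−1} be Markov kernels on ℝ^d admitting positive transition densities with respect to Lebesgue measure, and let (X₀,…,X_k) be the Markov chain with X₀ having density q₀(x) = Π₀(x)/∫Π₀, and X_n | X_{n−1} = x distributed according to K_n(x,·). Define the incremental weights G_n(x,y) = Π_n(y) L_{n−1}(y,x) / (Π_{n−1}(x) K_n(x,y)). Then for every measurable φ: ℝ^d → ℝ^m for which the relevant integrals are finite, E[φ(X_k) ∏_{n=1}^k G_n(X_{n−1},X_n)] = (∫ φ(x) Π_k(x) dx) / (∫ Π₀(x) dx); in particular, E[φ(X_k) ∏_{n=1}^k G_n(X_{n−1},X_n)] / E[∏_{n=1}^k G_n(X_{n−1},X_n)] = ∫ φ(x) π_k(x) dx, where π_k = Π_k/∫Π_k is the normalised density. -/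
/-!
Cancelling the `K`'s and telescoping the ratios `Πₙ/Πₙ₋₁`, the weighted proposal density
`q · ∏ Gₙ` equals `(∫ Π₀)⁻¹ Π_k(x_k) ∏ₙ Lₙ₋₁(xₙ, xₙ₋₁)`: the law of a backward
Markov chain started from `Π_k` and run through the kernels `L`. Integrating out
`x₀, x₁, …` in turn, each factor `Lₙ₋₁(xₙ, ·)` integrates to one, so the
`x_k`-marginal of this density is `Π_k`.
-/

open MeasureTheory

noncomputable section

open scoped ENNReal

theorem Fin.mul_prod_succ_mul_div_castSucc {R : Type*} [Field R] {k : ℕ} (P : Fin (k + 1) → R)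
    (a b : Fin k → R) (hP : ∀ n, P n ≠ 0) (ha : ∀ n, a n ≠ 0) :
    P 0 * ∏ n, a n * (P n.succ * b n / (P n.castSucc * a n)) = P (Fin.last k) * ∏ n, b n := by
  have hterm : ∀ n, a n * (P n.succ * b n / (P n.castSucc * a n)) =
      P n.succ / P n.castSucc * b n := fun n => by field_simp [hP n.castSucc, ha n]
  have htel : P 0 * ∏ n : Fin k, P n.succ = (∏ n : Fin k, P n.castSucc) * P (Fin.last k) := by
    rw [← Fin.prod_univ_succ, Fin.prod_univ_castSucc]
  simp only [hterm, Finset.prod_mul_distrib, Finset.prod_div_distrib]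
  rw [← mul_assoc, mul_div_assoc', htel,
    mul_div_cancel_left₀ _ (Finset.prod_ne_zero_iff.mpr fun n _ => hP _)]

theorem integral_withDensity_ofReal_eq_integral_smul {X E : Type*} [MeasurableSpace X]
    [NormedAddCommGroup E] [NormedSpace ℝ E] {μ : Measure X} {f : X → ℝ} (hf : Measurable f)
    (hf0 : ∀ x, 0 ≤ f x) (g : X → E) :
    ∫ x, g x ∂μ.withDensity (fun x => ENNReal.ofReal (f x)) = ∫ x, f x • g x ∂μ := by
  simp only [ENNReal.ofReal, integral_withDensity_eq_integral_smul hf.real_toNNReal,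
    NNReal.smul_def, Real.coe_toNNReal _ (hf0 _)]

section BackwardKernels

variable {α : Type*} [MeasurableSpace α] (μ : Measure α) [SigmaFinite μ]

theorem measurable_prod_apply_succ_castSucc {M : Type*} [CommMonoid M] [MeasurableSpace M]
    [MeasurableMul₂ M] {k : ℕ} {L : Fin k → α → α → M}
    (hL : ∀ n, Measurable (Function.uncurry (L n))) :
    Measurable fun p : Fin (k + 1) → α => ∏ n, L n (p n.succ) (p n.castSucc) :=
  Finset.measurable_prod _ fun n _ =>
    (hL n).comp (f := fun p : Fin (k + 1) → α => (p n.succ, p n.castSucc))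
      ((measurable_pi_apply _).prodMk (measurable_pi_apply _))

theorem lintegral_pi_comp_last_mul_prod {k : ℕ} {L : Fin k → α → α → ℝ≥0∞}
    (hL : ∀ n, Measurable (Function.uncurry (L n))) (hL1 : ∀ n y, ∫⁻ x, L n y x ∂μ = 1)
    {g : α → ℝ≥0∞} (hg : Measurable g) :
    ∫⁻ p, g (p (Fin.last k)) * ∏ n, L n (p n.succ) (p n.castSucc)
      ∂(Measure.pi fun _ => μ) = ∫⁻ x, g x ∂μ := by
  induction k with
  | zero =>
    simp only [Finset.univ_eq_empty, Finset.prod_empty, mul_one]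
    exact (measurePreserving_funUnique μ (Fin 1)).lintegral_comp hg
  | succ k ih =>
    have hF : Measurable fun p : Fin (k + 2) → α =>
        g (p (Fin.last (k + 1))) * ∏ n, L n (p n.succ) (p n.castSucc) :=
      (hg.comp (measurable_pi_apply _)).mul (measurable_prod_apply_succ_castSucc hL)
    have hcons := (measurePreserving_piFinSuccAbove (fun _ : Fin (k + 2) => μ) 0).symm
    rw [← hcons.lintegral_comp hF]
    refine (lintegral_prod_symm _ (hF.comp hcons.measurable).aemeasurable).trans ?_
    simp only [Function.comp_apply, MeasurableEquiv.piFinSuccAbove_symm_apply,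
      Fin.insertNthEquiv_zero, Fin.consEquiv_apply, Fin.prod_univ_succ, ← Fin.succ_last,
      ← Fin.succ_castSucc, Fin.castSucc_zero, Fin.cons_zero, Fin.cons_succ, mul_left_comm (g _)]
    have hL0 : ∀ y, Measurable (L 0 y) := fun y => (hL 0).comp measurable_prodMk_left
    simp only [lintegral_mul_const _ (hL0 _), hL1, one_mul]
    exact ih (fun n => hL n.succ) (fun n => hL1 n.succ)

theorem map_eval_last_withDensity_comp_last_mul_prod {k : ℕ}
    {L : Fin k → α → α → ℝ≥0∞}
    (hL : ∀ n, Measurable (Function.uncurry (L n))) (hL1 : ∀ n y, ∫⁻ x, L n y x ∂μ = 1)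
    {g : α → ℝ≥0∞} (hg : Measurable g) :
    ((Measure.pi fun _ => μ).withDensity
        fun p => g (p (Fin.last k)) * ∏ n, L n (p n.succ) (p n.castSucc)).map
      (fun p => p (Fin.last k)) = μ.withDensity g := by
  ext s hs
  have hpre : MeasurableSet ((fun p : Fin (k + 1) → α => p (Fin.last k)) ⁻¹' s) :=
    measurable_pi_apply _ hs
  rw [Measure.map_apply (measurable_pi_apply _) hs, withDensity_apply _ hpre,
    withDensity_apply _ hs, ← lintegral_indicator hpre, ← lintegral_indicator hs,
    ← lintegral_pi_comp_last_mul_prod μ hL hL1 (hg.indicator hs)]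
  congr with p
  by_cases hp : p (Fin.last k) ∈ s <;> simp [hp]

theorem integral_pi_comp_last_mul_prod_smul {E : Type*} [NormedAddCommGroup E] [NormedSpace ℝ E]
    {k : ℕ} {L : Fin k → α → α → ℝ} (hL : ∀ n, Measurable (Function.uncurry (L n)))
    (hL0 : ∀ n y x, 0 ≤ L n y x) (hL1 : ∀ n y, ∫ x, L n y x ∂μ = 1)
    {f : α → ℝ} (hf : Measurable f) (hf0 : ∀ x, 0 ≤ f x) {ψ : α → E}
    (hψ : StronglyMeasurable ψ) :
    ∫ p, (f (p (Fin.last k)) * ∏ n, L n (p n.succ) (p n.castSucc)) • ψ (p (Fin.last k))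
        ∂(Measure.pi fun _ => μ) = ∫ x, f x • ψ x ∂μ := by
  have hL1_lintegral : ∀ n y, ∫⁻ x, ENNReal.ofReal (L n y x) ∂μ = 1 := fun n y => by
    rw [← ofReal_integral_eq_lintegral_ofReal (integrable_of_integral_eq_one (hL1 n y))
      (ae_of_all _ (hL0 n y)), hL1, ENNReal.ofReal_one]
  have hmap := map_eval_last_withDensity_comp_last_mul_prod μ
    (L := fun n y x => ENNReal.ofReal (L n y x)) (g := fun x => ENNReal.ofReal (f x))
    (fun n => ENNReal.measurable_ofReal.comp (hL n)) hL1_lintegral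
    (ENNReal.measurable_ofReal.comp hf)
  have hw : Measurable fun p : Fin (k + 1) → α =>
      f (p (Fin.last k)) * ∏ n, L n (p n.succ) (p n.castSucc) :=
    (hf.comp (measurable_pi_apply _)).mul (measurable_prod_apply_succ_castSucc hL)
  have hw0 : ∀ p : Fin (k + 1) → α,
      0 ≤ f (p (Fin.last k)) * ∏ n, L n (p n.succ) (p n.castSucc) :=
    fun p => mul_nonneg (hf0 _) (Finset.prod_nonneg fun n _ => hL0 n _ _)
  have hdensity : (fun p : Fin (k + 1) → α =>
      ENNReal.ofReal (f (p (Fin.last k)) * ∏ n, L n (p n.succ) (p n.castSucc))) =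
      fun p => ENNReal.ofReal (f (p (Fin.last k))) *
        ∏ n, ENNReal.ofReal (L n (p n.succ) (p n.castSucc)) := by
    ext p
    rw [ENNReal.ofReal_mul (hf0 _), ENNReal.ofReal_prod_of_nonneg fun n _ => hL0 n _ _]
  rw [← integral_withDensity_ofReal_eq_integral_smul hw hw0, hdensity,
    ← integral_withDensity_ofReal_eq_integral_smul hf hf0, ← hmap,
    integral_map (measurable_pi_apply _).aemeasurable hψ.aestronglyMeasurable]

end BackwardKernels

theorem feynman_kac_identity_general
    {d m k : ℕ} (Pim : Fin (k + 1) → EuclideanSpace ℝ (Fin d) → ℝ)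
    (hPim_meas : ∀ n, Measurable (Pim n))
    (hPim_pos : ∀ n x, 0 < Pim n x)
    (hPim_ipos : ∀ n, 0 < ∫ x, Pim n x)
    (K L : Fin k → EuclideanSpace ℝ (Fin d) → EuclideanSpace ℝ (Fin d) → ℝ)
    (hL_meas : ∀ n, Measurable (Function.uncurry (L n)))
    (hK_pos : ∀ n x y, 0 < K n x y)
    (hL_pos : ∀ n x y, 0 < L n x y)
    (hL_markov : ∀ n y, ∫ x, L n y x = 1)
    (φ : EuclideanSpace ℝ (Fin d) → EuclideanSpace ℝ (Fin m))
    (hφ_meas : Measurable φ)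
    (q : (Fin (k + 1) → EuclideanSpace ℝ (Fin d)) → ℝ)
    (hq : ∀ p, q p =
      Pim 0 (p 0) / (∫ x, Pim 0 x) * ∏ n : Fin k, K n (p n.castSucc) (p n.succ))
    (G : Fin k → EuclideanSpace ℝ (Fin d) → EuclideanSpace ℝ (Fin d) → ℝ)
    (hG : ∀ n x y, G n x y = Pim n.succ y * L n y x / (Pim n.castSucc x * K n x y)) :
    (∫ p : Fin (k + 1) → EuclideanSpace ℝ (Fin d),
        (q p * ∏ n : Fin k, G n (p n.castSucc) (p n.succ)) • φ (p (Fin.last k)))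
      = (∫ x, Pim 0 x)⁻¹ • ∫ x, Pim (Fin.last k) x • φ x ∧
    (∫ p : Fin (k + 1) → EuclideanSpace ℝ (Fin d),
        q p * ∏ n : Fin k, G n (p n.castSucc) (p n.succ))⁻¹ •
      (∫ p : Fin (k + 1) → EuclideanSpace ℝ (Fin d),
        (q p * ∏ n : Fin k, G n (p n.castSucc) (p n.succ)) • φ (p (Fin.last k)))
      = (∫ x, Pim (Fin.last k) x)⁻¹ • ∫ x, Pim (Fin.last k) x • φ x := by
  have hweight : ∀ p, q p * ∏ n : Fin k, G n (p n.castSucc) (p n.succ) = (∫ x, Pim 0 x)⁻¹ *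
      (Pim (Fin.last k) (p (Fin.last k)) * ∏ n : Fin k, L n (p n.succ) (p n.castSucc)) := by
    intro p
    rw [hq, div_eq_inv_mul, mul_assoc, mul_assoc, ← Finset.prod_mul_distrib]
    simp only [hG]
    rw [Fin.mul_prod_succ_mul_div_castSucc (fun n => Pim n (p n)) _ _ (fun n => (hPim_pos _ _).ne')
      (fun n => (hK_pos _ _ _).ne')]
  have hintegral : ∀ {E : Type} [NormedAddCommGroup E] [NormedSpace ℝ E]
      (ψ : EuclideanSpace ℝ (Fin d) → E), StronglyMeasurable ψ →
      ∫ p : Fin (k + 1) → EuclideanSpace ℝ (Fin d),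
        (q p * ∏ n : Fin k, G n (p n.castSucc) (p n.succ)) • ψ (p (Fin.last k)) =
      (∫ x, Pim 0 x)⁻¹ • ∫ x, Pim (Fin.last k) x • ψ x := by
    intro E _ _ ψ hψ
    simp only [hweight, mul_smul (∫ x, Pim 0 x)⁻¹]
    rw [integral_smul, volume_pi, integral_pi_comp_last_mul_prod_smul volume hL_meas
      (fun n y x => (hL_pos n y x).le) hL_markov (hPim_meas _) (fun x => (hPim_pos _ x).le) hψ]
  have hmass := hintegral (fun _ => (1 : ℝ)) stronglyMeasurable_const
  simp only [smul_eq_mul, mul_one] at hmass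
  refine ⟨hintegral φ hφ_meas.stronglyMeasurable, ?_⟩
  rw [hintegral φ hφ_meas.stronglyMeasurable, hmass, smul_smul]
  congr 1
  field_simp [(hPim_ipos 0).ne', (hPim_ipos (Fin.last k)).ne']

/-- Feynman–Kac identity for SMC samplers: if the chain `(X₀,…,X_k)` has joint density
`q(x) = (Π₀(x₀)/∫Π₀) ∏ₙ Kₙ(xₙ₋₁,xₙ)` and incremental weights
`Gₙ(x,y) = Πₙ(y) Lₙ₋₁(y,x) / (Πₙ₋₁(x) Kₙ(x,y))`, then
`E[φ(X_k) ∏ₙ Gₙ] = (∫ φ Π_k)/(∫ Π₀)` and the self-normalised ratio equals `∫ φ π_k`. -/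
theorem feynman_kac_identity
    {d m k : ℕ} (hk : 1 ≤ k)
    (Pim : Fin (k + 1) → EuclideanSpace ℝ (Fin d) → ℝ)
    (hPim_meas : ∀ n, Measurable (Pim n))
    (hPim_pos : ∀ n x, 0 < Pim n x)
    (hPim_int : ∀ n, Integrable (Pim n))
    (hPim_ipos : ∀ n, 0 < ∫ x, Pim n x)
    (K L : Fin k → EuclideanSpace ℝ (Fin d) → EuclideanSpace ℝ (Fin d) → ℝ)
    (hK_meas : ∀ n, Measurable (Function.uncurry (K n)))
    (hL_meas : ∀ n, Measurable (Function.uncurry (L n)))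
    (hK_pos : ∀ n x y, 0 < K n x y)
    (hL_pos : ∀ n x y, 0 < L n x y)
    (hK_markov : ∀ n x, ∫ y, K n x y = 1)
    (hL_markov : ∀ n y, ∫ x, L n y x = 1)
    (φ : EuclideanSpace ℝ (Fin d) → EuclideanSpace ℝ (Fin m))
    (hφ_meas : Measurable φ)
    (hφ_int : Integrable fun x => Pim (Fin.last k) x • φ x)
    (q : (Fin (k + 1) → EuclideanSpace ℝ (Fin d)) → ℝ)
    (hq : ∀ p, q p =
      Pim 0 (p 0) / (∫ x, Pim 0 x) * ∏ n : Fin k, K n (p n.castSucc) (p n.succ))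
    (G : Fin k → EuclideanSpace ℝ (Fin d) → EuclideanSpace ℝ (Fin d) → ℝ)
    (hG : ∀ n x y, G n x y = Pim n.succ y * L n y x / (Pim n.castSucc x * K n x y))
    (hint_vec : Integrable fun p : Fin (k + 1) → EuclideanSpace ℝ (Fin d) =>
      (q p * ∏ n : Fin k, G n (p n.castSucc) (p n.succ)) • φ (p (Fin.last k)))
    (hint_sca : Integrable fun p : Fin (k + 1) → EuclideanSpace ℝ (Fin d) =>
      q p * ∏ n : Fin k, G n (p n.castSucc) (p n.succ)) :
    (∫ p : Fin (k + 1) → EuclideanSpace ℝ (Fin d),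
        (q p * ∏ n : Fin k, G n (p n.castSucc) (p n.succ)) • φ (p (Fin.last k)))
      = (∫ x, Pim 0 x)⁻¹ • ∫ x, Pim (Fin.last k) x • φ x ∧
    (∫ p : Fin (k + 1) → EuclideanSpace ℝ (Fin d),
        q p * ∏ n : Fin k, G n (p n.castSucc) (p n.succ))⁻¹ •
      (∫ p : Fin (k + 1) → EuclideanSpace ℝ (Fin d),
        (q p * ∏ n : Fin k, G n (p n.castSucc) (p n.succ)) • φ (p (Fin.last k)))
      = (∫ x, Pim (Fin.last k) x)⁻¹ • ∫ x, Pim (Fin.last k) x • φ x :=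
  feynman_kac_identity_general Pim hPim_meas hPim_pos hPim_ipos K L hL_meas hK_pos hL_pos hL_markov
    φ hφ_meas q hq G hG
end
end

section
/- Fix k ≥ 1. Let θ₀,…,θ_{k−1} ∈ ℝ^{d_θ} and suppose that for each θ the unnormalised density Π_θ(x) = exp(−U_θ(x)) on ℝ^{d_x} satisfies Z_θ = ∫ exp(−U_θ(x)) dx < ∞. Let K₁,…,K_{k−1} and L₀,…,L_{k−2} be Markov kernels on ℝ^{d_x} with positive transition densities, let X₀ have density π_{θ₀} = Π_{θ₀}/Z_{θ₀}, let X_n | X_{n−1} ∼ K_n(X_{n−1},·), and define the weights by W₀ = 1 and W_n = W_{n−1} · Π_{θ_n}(X_n) L_{n−1}(X_n, X_{n−1}) / (Π_{θ_{n−1}}(X_{n−1}) K_n(X_{n−1}, X_n)). Let H: ℝ^{d_x} → ℝ^{d_θ} be measurable with the relevant expectations finite. Then E[H(X_{k−1}) W_{k−1}] / E[W_{k−1}] = ∫ H(x) π_{θ_{k−1}}(x) dx, where π_{θ_{k−1}} = Π_{θ_{k−1}}/Z_{θ_{k−1}}. In particular, if the loss ℓ: ℝ^{d_θ} → ℝ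 satisfies ∇ℓ(θ_{k−1}) = ∫ H(x) π_{θ_{k−1}}(x) dx, the ratio equals ∇ℓ(θ_{k−1}). -/
/-!
Both sides of the ratio are integrals against the proposal path density times the weight, and in
that product the forward kernels `Kₙ` cancel while the unnormalised targets telescope: what is left
is `Z_{θ₀}⁻¹ · ∏ₙ Lₙ(xₙ₊₁, xₙ) · Π_{θ_last}(x_last)`. Since each `Lₙ(y, ·)` integrates to one,
integrating out `x₀, x₁, …` in turn leaves `Z_{θ₀}⁻¹ ∫ Π_{θ_last} • H` in the numerator and
`Z_{θ₀}⁻¹ Z_{θ_last}` in the denominator, so `Z_{θ₀}` cancels in the ratio.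
-/

open MeasureTheory

namespace MeasureTheory

variable {α : Type*} [MeasurableSpace α] {μ : Measure α} [SigmaFinite μ] {n : ℕ}

theorem measurePreserving_fin_cons :
    MeasurePreserving (fun z : α × (Fin n → α) => (Fin.cons z.1 z.2 : Fin (n + 1) → α))
      (μ.prod (Measure.pi fun _ => μ)) (Measure.pi fun _ => μ) := by
  convert (measurePreserving_piFinSuccAbove (fun _ : Fin (n + 1) => μ) 0).symm using 1
  ext z
  simp [MeasurableEquiv.piFinSuccAbove_symm_apply, Fin.insertNthEquiv, Fin.insertNth_zero']

theorem measurableEmbedding_fin_cons :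
    MeasurableEmbedding (fun z : α × (Fin n → α) => (Fin.cons z.1 z.2 : Fin (n + 1) → α)) := by
  convert (MeasurableEquiv.piFinSuccAbove (fun _ : Fin (n + 1) => α) 0).symm.measurableEmbedding
  ext z
  simp [MeasurableEquiv.piFinSuccAbove_symm_apply, Fin.insertNthEquiv, Fin.insertNth_zero']

variable {E : Type*} [NormedAddCommGroup E] {G : (Fin (n + 1) → α) → E}

theorem Integrable.comp_fin_cons (hG : Integrable G (Measure.pi fun _ => μ)) :
    Integrable (fun z : α × (Fin n → α) => G (Fin.cons z.1 z.2)) (μ.prod (Measure.pi fun _ => μ)) :=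
  (measurePreserving_fin_cons.integrable_comp_emb measurableEmbedding_fin_cons).mpr hG

variable [NormedSpace ℝ E]

theorem Integrable.integral_fin_cons (hG : Integrable G (Measure.pi fun _ => μ)) :
    Integrable (fun t => ∫ x, G (Fin.cons x t) ∂μ) (Measure.pi fun _ => μ) :=
  hG.comp_fin_cons.integral_prod_right

theorem integral_fin_cons (hG : Integrable G (Measure.pi fun _ => μ)) :
    ∫ p, G p ∂(Measure.pi fun _ => μ) = ∫ t, ∫ x, G (Fin.cons x t) ∂μ ∂(Measure.pi fun _ => μ) := by
  rw [← measurePreserving_fin_cons.integral_comp measurableEmbedding_fin_cons]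
  exact integral_prod_symm _ hG.comp_fin_cons

end MeasureTheory

section BackwardDensity

variable {α : Type*}

def backwardDensity {j : ℕ} (L : Fin j → α → α → ℝ) (p : Fin (j + 1) → α) : ℝ :=
  ∏ n, L n (p n.succ) (p n.castSucc)

theorem backwardDensity_cons {j : ℕ} (L : Fin (j + 1) → α → α → ℝ) (x : α)
    (t : Fin (j + 1) → α) :
    backwardDensity L (Fin.cons x t) = L 0 (t 0) x * backwardDensity (fun n => L n.succ) t := by
  simp only [backwardDensity, Fin.prod_univ_succ, ← Fin.succ_castSucc, Fin.cons_succ,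
    Fin.castSucc_zero, Fin.cons_zero]

variable [MeasurableSpace α] {μ : Measure α} [SigmaFinite μ]
  {E : Type*} [NormedAddCommGroup E] [NormedSpace ℝ E] [CompleteSpace E]

theorem integral_backwardDensity_smul {j : ℕ} (L : Fin j → α → α → ℝ)
    (hL : ∀ n y, ∫ x, L n y x ∂μ = 1) (f : α → E)
    (hf : Integrable (fun p => backwardDensity L p • f (p (Fin.last j))) (Measure.pi fun _ => μ)) :
    ∫ p, backwardDensity L p • f (p (Fin.last j)) ∂(Measure.pi fun _ => μ) = ∫ x, f x ∂μ := by
  induction j with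
  | zero =>
    simp only [backwardDensity, Finset.univ_eq_empty, Finset.prod_empty, one_smul]
    exact (measurePreserving_funUnique μ (Fin 1)).integral_comp
      (MeasurableEquiv.measurableEmbedding _) f
  | succ j ih =>
    have hinner : ∀ t, ∫ x, backwardDensity L (Fin.cons x t) •
          f ((Fin.cons x t : Fin (j + 2) → α) (Fin.last (j + 1))) ∂μ
        = backwardDensity (fun n => L n.succ) t • f (t (Fin.last j)) := by
      intro t
      simp only [backwardDensity_cons, mul_smul, ← Fin.succ_last, Fin.cons_succ,
        integral_smul_const, hL, one_smul]
    have hf' := hf.integral_fin_cons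
    simp only [hinner] at hf'
    rw [integral_fin_cons hf]
    simp only [hinner]
    exact ih (fun n => L n.succ) (fun n => hL n.succ) hf'

theorem integral_smul_eq_of_eq_mul_backwardDensity {j : ℕ} {L : Fin j → α → α → ℝ}
    (hL : ∀ n y, ∫ x, L n y x ∂μ = 1) {w : (Fin (j + 1) → α) → ℝ} {c : ℝ} {g : α → ℝ}
    (hc : c ≠ 0) (hw : ∀ p, w p = c * (backwardDensity L p * g (p (Fin.last j)))) (F : α → E)
    (hint : Integrable (fun p => w p • F (p (Fin.last j))) (Measure.pi fun _ => μ)) :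
    ∫ p, w p • F (p (Fin.last j)) ∂(Measure.pi fun _ => μ) = c • ∫ x, g x • F x ∂μ := by
  have hw' : (fun p => w p • F (p (Fin.last j))) =
      fun p => c • (backwardDensity L p • (g (p (Fin.last j)) • F (p (Fin.last j)))) := by
    funext p
    rw [hw, mul_smul, mul_smul]
  rw [hw'] at hint ⊢
  rw [integral_smul, integral_backwardDensity_smul L hL (fun x => g x • F x)
    ((integrable_smul_iff hc _).mp hint)]

end BackwardDensity

theorem Fin.mul_prod_mul_prod_succ_div_castSucc {K : Type*} [Field K] {j : ℕ}
    (g : Fin (j + 1) → K) (k l : Fin j → K) (hg : ∀ i, g i ≠ 0) (hk : ∀ n, k n ≠ 0) :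
    g 0 * (∏ n, k n) * ∏ n, g n.succ * l n / (g n.castSucc * k n) =
      (∏ n, l n) * g (Fin.last j) := by
  have htelescope : g 0 * ∏ n : Fin j, g n.succ = (∏ n : Fin j, g n.castSucc) * g (Fin.last j) :=
    (Fin.prod_univ_succ g).symm.trans (Fin.prod_univ_castSucc g)
  have hgprod : ∏ n : Fin j, g n.castSucc ≠ 0 := Finset.prod_ne_zero_iff.mpr fun n _ => hg _
  have hkprod : ∏ n, k n ≠ 0 := Finset.prod_ne_zero_iff.mpr fun n _ => hk n
  rw [Finset.prod_div_distrib, Finset.prod_mul_distrib, Finset.prod_mul_distrib]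
  field_simp
  linear_combination (∏ n, l n) * htelescope

theorem smc_exact_gradient_recovery_general
    {dx dθ j : ℕ}
    (U : EuclideanSpace ℝ (Fin dθ) → EuclideanSpace ℝ (Fin dx) → ℝ)
    (hZ : ∀ t, Integrable fun x => Real.exp (-U t x))
    (θ : Fin (j + 1) → EuclideanSpace ℝ (Fin dθ))
    (K L : Fin j → EuclideanSpace ℝ (Fin dx) → EuclideanSpace ℝ (Fin dx) → ℝ)
    (hK_pos : ∀ n x y, 0 < K n x y)
    (hL_markov : ∀ n y, (∫ x, L n y x) = 1)
    (H : EuclideanSpace ℝ (Fin dx) → EuclideanSpace ℝ (Fin dθ))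
    (q : (Fin (j + 1) → EuclideanSpace ℝ (Fin dx)) → ℝ)
    (hq : ∀ p, q p =
      Real.exp (-U (θ 0) (p 0)) / (∫ x, Real.exp (-U (θ 0) x)) *
        ∏ n : Fin j, K n (p n.castSucc) (p n.succ))
    (W : (Fin (j + 1) → EuclideanSpace ℝ (Fin dx)) → ℝ)
    (hW : ∀ p, W p = ∏ n : Fin j,
      Real.exp (-U (θ n.succ) (p n.succ)) * L n (p n.succ) (p n.castSucc) /
        (Real.exp (-U (θ n.castSucc) (p n.castSucc)) * K n (p n.castSucc) (p n.succ)))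
    (hint_vec : Integrable fun p : Fin (j + 1) → EuclideanSpace ℝ (Fin dx) =>
      (q p * W p) • H (p (Fin.last j)))
    (hint_sca : Integrable fun p : Fin (j + 1) → EuclideanSpace ℝ (Fin dx) => q p * W p)
    (ℓ : EuclideanSpace ℝ (Fin dθ) → ℝ)
    (hgrad : gradient ℓ (θ (Fin.last j)) =
      (∫ x, Real.exp (-U (θ (Fin.last j)) x))⁻¹ •
        ∫ x, Real.exp (-U (θ (Fin.last j)) x) • H x) :
    (∫ p : Fin (j + 1) → EuclideanSpace ℝ (Fin dx), q p * W p)⁻¹ •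
      (∫ p : Fin (j + 1) → EuclideanSpace ℝ (Fin dx), (q p * W p) • H (p (Fin.last j)))
      = (∫ x, Real.exp (-U (θ (Fin.last j)) x))⁻¹ •
          ∫ x, Real.exp (-U (θ (Fin.last j)) x) • H x ∧
    (∫ p : Fin (j + 1) → EuclideanSpace ℝ (Fin dx), q p * W p)⁻¹ •
      (∫ p : Fin (j + 1) → EuclideanSpace ℝ (Fin dx), (q p * W p) • H (p (Fin.last j)))
      = gradient ℓ (θ (Fin.last j)) := by
  set Z₀ := ∫ x, Real.exp (-U (θ 0) x)
  set γ := fun x => Real.exp (-U (θ (Fin.last j)) x)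
  have hZ₀ : Z₀ ≠ 0 := (integral_exp_pos (hZ (θ 0))).ne'
  have hqW : ∀ p, q p * W p = Z₀⁻¹ * (backwardDensity L p * γ (p (Fin.last j))) := by
    intro p
    rw [hq, hW, backwardDensity, ← Fin.mul_prod_mul_prod_succ_div_castSucc
      (fun i => Real.exp (-U (θ i) (p i))) _ _ (fun _ => (Real.exp_pos _).ne')
      (fun n => (hK_pos n _ _).ne')]
    ring
  have hnum : ∫ p, (q p * W p) • H (p (Fin.last j)) = Z₀⁻¹ • ∫ x, γ x • H x :=
    integral_smul_eq_of_eq_mul_backwardDensity hL_markov (inv_ne_zero hZ₀) hqW H hint_vec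
  have hden : ∫ p, q p * W p = Z₀⁻¹ * ∫ x, γ x := by
    have h := integral_smul_eq_of_eq_mul_backwardDensity hL_markov (inv_ne_zero hZ₀) hqW
      (fun _ => (1 : ℝ)) (by simp only [smul_eq_mul, mul_one]; exact hint_sca)
    simp only [smul_eq_mul, mul_one] at h
    exact h
  have hratio : (∫ p, q p * W p)⁻¹ • ∫ p, (q p * W p) • H (p (Fin.last j)) =
      (∫ x, γ x)⁻¹ • ∫ x, γ x • H x := by
    rw [hnum, hden, smul_smul, mul_inv, inv_inv, mul_comm Z₀, mul_assoc, mul_inv_cancel₀ hZ₀,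
      mul_one]
  exact ⟨hratio, hratio.trans hgrad.symm⟩

/-- Exact gradient recovery for the idealised SMC scheme: with `k = j + 1 ≥ 1`,
parameters `θ₀,…,θ_j`, chain `X₀ ∼ π_{θ₀}`, `Xₙ ∼ Kₙ(Xₙ₋₁,·)`, and weights
`W_j = ∏ₙ G_n`, the self-normalised weighted expectation of `H` equals
`∫ H dπ_{θ_j}`, and in particular equals `∇ℓ(θ_j)` when the latter has this form. -/
theorem smc_exact_gradient_recovery
    {dx dθ j : ℕ}
    (U : EuclideanSpace ℝ (Fin dθ) → EuclideanSpace ℝ (Fin dx) → ℝ)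
    (hU_meas : ∀ t, Measurable (U t))
    (hZ : ∀ t, Integrable fun x => Real.exp (-U t x))
    (θ : Fin (j + 1) → EuclideanSpace ℝ (Fin dθ))
    (K L : Fin j → EuclideanSpace ℝ (Fin dx) → EuclideanSpace ℝ (Fin dx) → ℝ)
    (hK_meas : ∀ n, Measurable (Function.uncurry (K n)))
    (hL_meas : ∀ n, Measurable (Function.uncurry (L n)))
    (hK_pos : ∀ n x y, 0 < K n x y)
    (hL_pos : ∀ n x y, 0 < L n x y)
    (hK_markov : ∀ n x, (∫ y, K n x y) = 1)
    (hL_markov : ∀ n y, (∫ x, L n y x) = 1)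
    (H : EuclideanSpace ℝ (Fin dx) → EuclideanSpace ℝ (Fin dθ))
    (hH_meas : Measurable H)
    (q : (Fin (j + 1) → EuclideanSpace ℝ (Fin dx)) → ℝ)
    (hq : ∀ p, q p =
      Real.exp (-U (θ 0) (p 0)) / (∫ x, Real.exp (-U (θ 0) x)) *
        ∏ n : Fin j, K n (p n.castSucc) (p n.succ))
    (W : (Fin (j + 1) → EuclideanSpace ℝ (Fin dx)) → ℝ)
    (hW : ∀ p, W p = ∏ n : Fin j,
      Real.exp (-U (θ n.succ) (p n.succ)) * L n (p n.succ) (p n.castSucc) /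
        (Real.exp (-U (θ n.castSucc) (p n.castSucc)) * K n (p n.castSucc) (p n.succ)))
    (hint_vec : Integrable fun p : Fin (j + 1) → EuclideanSpace ℝ (Fin dx) =>
      (q p * W p) • H (p (Fin.last j)))
    (hint_sca : Integrable fun p : Fin (j + 1) → EuclideanSpace ℝ (Fin dx) => q p * W p)
    (hH_int : Integrable fun x => Real.exp (-U (θ (Fin.last j)) x) • H x)
    (ℓ : EuclideanSpace ℝ (Fin dθ) → ℝ)
    (hgrad : gradient ℓ (θ (Fin.last j)) =
      (∫ x, Real.exp (-U (θ (Fin.last j)) x))⁻¹ •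
        ∫ x, Real.exp (-U (θ (Fin.last j)) x) • H x) :
    (∫ p : Fin (j + 1) → EuclideanSpace ℝ (Fin dx), q p * W p)⁻¹ •
      (∫ p : Fin (j + 1) → EuclideanSpace ℝ (Fin dx), (q p * W p) • H (p (Fin.last j)))
      = (∫ x, Real.exp (-U (θ (Fin.last j)) x))⁻¹ •
          ∫ x, Real.exp (-U (θ (Fin.last j)) x) • H x ∧
    (∫ p : Fin (j + 1) → EuclideanSpace ℝ (Fin dx), q p * W p)⁻¹ •
      (∫ p : Fin (j + 1) → EuclideanSpace ℝ (Fin dx), (q p * W p) • H (p (Fin.last j)))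
      = gradient ℓ (θ (Fin.last j)) :=
  smc_exact_gradient_recovery_general U hZ θ K L hK_pos hL_markov H q hq W hW hint_vec hint_sca ℓ
    hgrad
end

section
/- Let π_θ(x) = exp(−U_θ(x))/Z_θ be a family of probability densities on ℝ^{d_x}, where for every x the map θ ↦ U_θ(x) is twice continuously differentiable. Let ℓ: ℝ^{d_θ} → ℝ be differentiable, fix θ_{k−1} with ‖∇ℓ(θ_{k−1})‖₂ = L, and set θ_k = θ_{k−1} − γ∇ℓ(θ_{k−1}) for γ > 0. Suppose there exist a radius r > 0, a measurable vector function S₁: ℝ^{d_x} → ℝ^{d_θ} and a measurable symmetric-matrix function S₂: ℝ^{d_x} → ℝ^{d_θ×d_θ} such that, for every x and every θ ∈ B_{θ_{k−1}}(r), the componentwise bounds |∇_θU_θ(x)| ≤ S₁(x) and ∇_θ∇_θᵀU_θ(x) ⪯ S₂(x) (Loewner order) hold, and such that E_{π_{θ_{k−1}}}[exp(λᵀS₁(x))] < ∞ and E_{π_{θ_{k−1}}}[exp(λᵀS₂(x)λ)] < ∞ for all λ in a neighbourhood of 0 in ℝ^{d_θ}. Then, as γ → 0, χ²(π_{θ_k}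 ‖ π_{θ_{k−1}}) ≤ √(γ² ∇ℓ(θ_{k−1})ᵀ I_{θ_{k−1}} ∇ℓ(θ_{k−1})) + O(γ^{3/2}), where I_{θ_{k−1}} = E_{π_{θ_{k−1}}}[ ∇_θU_{θ_{k−1}}(x) ∇_θU_{θ_{k−1}}(x)ᵀ ]. -/
open MeasureTheory Asymptotics Topology
open scoped RealInnerProductSpace

noncomputable section

/-- The Gibbs probability density `π_θ(x) = exp(−U_θ(x))/Z_θ`. -/
def gibbsDensity {dx dθ : ℕ}
    (U : EuclideanSpace ℝ (Fin dθ) → EuclideanSpace ℝ (Fin dx) → ℝ)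
    (t : EuclideanSpace ℝ (Fin dθ)) (x : EuclideanSpace ℝ (Fin dx)) : ℝ :=
  Real.exp (-U t x) / ∫ y, Real.exp (-U t y)

/-- The chi-square divergence `χ²(p ‖ q) = ∫ (p/q − 1)² q`. -/
def chiSqDiv {dx : ℕ} (p q : EuclideanSpace ℝ (Fin dx) → ℝ) : ℝ :=
  ∫ x, (p x / q x - 1) ^ 2 * q x

/-!
Write `θ_k = θ_{k-1} - γ g`. The two Gibbs densities differ by the weight `X = exp Δ`, where
`Δ = U_{θ_{k-1}} - U_{θ_k}`, so `π_{θ_k} = X π_{θ_{k-1}} / a` with `a = E[X]`, and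
`χ² = Var(X) / a² ≤ 4 E[(X - 1)²]` as soon as `E[(X - 1)²] ≤ 1/4`. On the ball the mean value
theorem gives `|Δ| ≤ γ M` with `M = ∑ |g_i| S₁_i`, hence `(X - 1)² ≤ (γ/δ)² exp (4 δ M)`, whose
expectation is finite by the exponential moment of `S₁` once `δ` is small. So `χ² = O(γ²)`,
which is `O(γ^{3/2})` for `γ ≤ 1`.
-/

open Real

theorem abs_exp_sub_one_le_mul_exp_abs (t : ℝ) : |exp t - 1| ≤ |t| * exp |t| := by
  rcases le_or_gt 0 t with ht | ht
  · rw [abs_of_nonneg ht, abs_of_nonneg (by linarith [add_one_le_exp t])]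
    have : exp t * exp (-t) = 1 := by rw [← exp_add, add_neg_cancel, exp_zero]
    nlinarith [add_one_le_exp (-t), exp_pos t]
  · rw [abs_of_neg ht, abs_of_nonpos (by linarith [exp_le_one_iff.mpr ht.le])]
    nlinarith [add_one_le_exp t, one_le_exp (neg_nonneg.mpr ht.le)]

theorem abs_exp_sub_one_le_of_abs_le_mul {t γ δ m : ℝ} (hδ : 0 < δ) (hγ : 0 ≤ γ) (hγδ : γ ≤ δ)
    (hm : 0 ≤ m) (ht : |t| ≤ γ * m) : |exp t - 1| ≤ γ / δ * exp (2 * δ * m) := by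
  have hm_le : m ≤ exp (δ * m) / δ := by
    rw [le_div_iff₀ hδ]
    linarith [add_one_le_exp (δ * m)]
  calc |exp t - 1| ≤ |t| * exp |t| := abs_exp_sub_one_le_mul_exp_abs t
    _ ≤ γ * m * exp (δ * m) := by
      gcongr
      exact ht.trans (by gcongr)
    _ ≤ γ * (exp (δ * m) / δ) * exp (δ * m) := by gcongr
    _ = γ / δ * exp (2 * δ * m) := by
      rw [show 2 * δ * m = δ * m + δ * m by ring, exp_add]
      ring

theorem integral_sub_integral_mul_sq_mul {α : Type*} [MeasurableSpace α] {μ : Measure α}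
    {q X : α → ℝ} (c : ℝ) (hq : Integrable q μ) (hq1 : ∫ x, q x ∂μ = 1)
    (hXq : Integrable (fun x => X x * q x) μ) (hX2 : Integrable (fun x => (X x - c) ^ 2 * q x) μ) :
    ∫ x, (X x - ∫ y, X y * q y ∂μ) ^ 2 * q x ∂μ =
      ∫ x, (X x - c) ^ 2 * q x ∂μ - (∫ y, X y * q y ∂μ - c) ^ 2 := by
  set a := ∫ y, X y * q y ∂μ
  have hexpand : ∀ x, (X x - a) ^ 2 * q x =
      (X x - c) ^ 2 * q x - 2 * (a - c) * (X x * q x) + ((a - c) ^ 2 + 2 * (a - c) * c) * q x :=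
    fun x => by ring
  simp_rw [hexpand]
  rw [integral_add (hX2.sub' (hXq.const_mul _)) (hq.const_mul _),
    integral_sub hX2 (hXq.const_mul _),
    integral_const_mul, integral_const_mul, hq1]
  ring

theorem chiSqDiv_reweight_le {dx : ℕ} {q X : EuclideanSpace ℝ (Fin dx) → ℝ}
    (hq0 : ∀ x, 0 ≤ q x) (hq : Integrable q) (hq1 : ∫ x, q x = 1) (hX : AEStronglyMeasurable X)
    (hX2 : Integrable fun x => (X x - 1) ^ 2 * q x)
    (hsmall : ∫ x, (X x - 1) ^ 2 * q x ≤ 1 / 4) :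
    chiSqDiv (fun x => X x * q x / ∫ y, X y * q y) q ≤ 4 * ∫ x, (X x - 1) ^ 2 * q x := by
  set a := ∫ y, X y * q y
  set m₂ := ∫ x, (X x - 1) ^ 2 * q x
  have hXq : Integrable fun x => X x * q x := by
    refine (hX2.add (hq.const_mul 2)).mono' (hX.mul hq.1) (Filter.Eventually.of_forall fun x => ?_)
    rw [Pi.add_apply, norm_mul, Real.norm_eq_abs, Real.norm_eq_abs, abs_of_nonneg (hq0 x),
      ← add_mul]
    refine mul_le_mul_of_nonneg_right (abs_le.mpr ⟨?_, ?_⟩) (hq0 x)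
    · nlinarith [sq_nonneg (X x - 1 / 2)]
    · nlinarith [sq_nonneg (X x - 3 / 2)]
  have hvar : ∫ x, (X x - a) ^ 2 * q x = m₂ - (a - 1) ^ 2 :=
    integral_sub_integral_mul_sq_mul 1 hq hq1 hXq hX2
  have hvar_nonneg : 0 ≤ ∫ x, (X x - a) ^ 2 * q x :=
    integral_nonneg fun x => mul_nonneg (sq_nonneg _) (hq0 x)
  have ha : 1 / 2 ≤ a := by nlinarith
  have hpt : ∀ x, (X x * q x / a / q x - 1) ^ 2 * q x = (X x - a) ^ 2 * q x / a ^ 2 := by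
    intro x
    rcases (hq0 x).eq_or_lt with hqx | hqx
    · simp [← hqx]
    · field_simp
  calc chiSqDiv (fun x => X x * q x / a) q = (m₂ - (a - 1) ^ 2) / a ^ 2 := by
        simp only [chiSqDiv, hpt, integral_div, hvar]
    _ ≤ m₂ / (1 / 2) ^ 2 := by gcongr <;> nlinarith
    _ = 4 * m₂ := by ring

theorem aemeasurable_of_integrable_exp_neg {α : Type*} [MeasurableSpace α] {μ : Measure α}
    {f : α → ℝ} (h : Integrable (fun x => exp (-f x)) μ) : AEMeasurable f μ := by
  simpa only [neg_neg] using (aemeasurable_of_aemeasurable_exp h.aemeasurable).fun_neg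

theorem abs_sub_le_sum_abs_mul_of_abs_gradient_le {ι : Type*} [Fintype ι]
    {f : EuclideanSpace ℝ ι → ℝ} (hf : Differentiable ℝ f) {c y s : EuclideanSpace ℝ ι} {r : ℝ}
    (hs : ∀ t ∈ Metric.closedBall c r, ∀ i, |gradient f t i| ≤ s i)
    (hy : y ∈ Metric.closedBall c r) :
    |f y - f c| ≤ ∑ i, |y i - c i| * s i := by
  have hc : c ∈ Metric.closedBall c r :=
    Metric.mem_closedBall_self (dist_nonneg.trans (Metric.mem_closedBall.mp hy))
  obtain ⟨z, hz, hfz⟩ := domain_mvt (fun x _ => (hf x).hasFDerivAt.hasFDerivWithinAt)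
    (convex_closedBall c r) hc hy
  have hzball := (convex_closedBall c r).segment_subset hc hy hz
  rw [hfz, ← inner_gradient_left, PiLp.inner_apply]
  refine (Finset.abs_sum_le_sum_abs _ _).trans (Finset.sum_le_sum fun i _ => ?_)
  rw [RCLike.inner_apply, conj_trivial, abs_mul, PiLp.sub_apply]
  exact mul_le_mul_of_nonneg_left (hs z hzball i) (abs_nonneg _)

theorem abs_sub_smul_sub_le_of_abs_gradient_le {ι : Type*} [Fintype ι]
    {f : EuclideanSpace ℝ ι → ℝ} (hf : Differentiable ℝ f) {c v s : EuclideanSpace ℝ ι} {r γ : ℝ}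
    (hs : ∀ t ∈ Metric.closedBall c r, ∀ i, |gradient f t i| ≤ s i) (hγ : 0 ≤ γ)
    (hγv : γ * ‖v‖ ≤ r) :
    |f (c - γ • v) - f c| ≤ γ * ∑ i, |v i| * s i := by
  refine (abs_sub_le_sum_abs_mul_of_abs_gradient_le hf hs ?_).trans_eq ?_
  · rwa [Metric.mem_closedBall, dist_eq_norm, sub_sub_cancel_left, norm_neg, norm_smul,
      Real.norm_of_nonneg hγ]
  · simp [Finset.mul_sum, abs_mul, mul_assoc, abs_of_nonneg hγ]

theorem integrable_exp_mul_sum_abs_mul {α ι : Type*} [Fintype ι] [MeasurableSpace α]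
    {μ : Measure α} {q : α → ℝ} {S : α → EuclideanSpace ℝ ι} {ε : ℝ}
    (hS : ∀ lam : EuclideanSpace ℝ ι, ‖lam‖ < ε →
      Integrable (fun x => exp (∑ i, lam i * S x i) * q x) μ)
    (v : EuclideanSpace ℝ ι) {c : ℝ} (hc : 0 ≤ c) (hcv : c * ‖v‖ < ε) :
    Integrable (fun x => exp (c * ∑ i, |v i| * S x i) * q x) μ := by
  set lam : EuclideanSpace ℝ ι := c • WithLp.toLp 2 fun i => |v i|
  have hlam : ‖lam‖ = c * ‖v‖ := by
    simp [lam, norm_smul, abs_of_nonneg hc, EuclideanSpace.norm_eq]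
  convert hS lam (hlam ▸ hcv) using 4 with x
  simp [lam, Finset.mul_sum, mul_assoc]

theorem integral_exp_sub_one_sq_mul_le {α : Type*} [MeasurableSpace α] {μ : Measure α}
    {q Δ M : α → ℝ} {γ δ : ℝ} (hq0 : ∀ x, 0 ≤ q x) (hq : AEStronglyMeasurable q μ)
    (hΔ : AEMeasurable Δ μ) (hM : ∀ x, 0 ≤ M x) (hδ : 0 < δ) (hγ : 0 ≤ γ) (hγδ : γ ≤ δ)
    (hΔM : ∀ x, |Δ x| ≤ γ * M x) (hK : Integrable (fun x => exp (4 * δ * M x) * q x) μ) :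
    Integrable (fun x => (exp (Δ x) - 1) ^ 2 * q x) μ ∧
      ∫ x, (exp (Δ x) - 1) ^ 2 * q x ∂μ ≤ (γ / δ) ^ 2 * ∫ x, exp (4 * δ * M x) * q x ∂μ := by
  have hpt : ∀ x, (exp (Δ x) - 1) ^ 2 * q x ≤ (γ / δ) ^ 2 * (exp (4 * δ * M x) * q x) := by
    intro x
    have h := abs_exp_sub_one_le_of_abs_le_mul hδ hγ hγδ (hM x) (hΔM x)
    calc (exp (Δ x) - 1) ^ 2 * q x ≤ (γ / δ * exp (2 * δ * M x)) ^ 2 * q x := by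
          rw [← sq_abs]
          exact mul_le_mul_of_nonneg_right (pow_le_pow_left₀ (abs_nonneg _) h 2) (hq0 x)
      _ = (γ / δ) ^ 2 * (exp (4 * δ * M x) * q x) := by
          rw [mul_pow, ← exp_nat_mul]
          ring_nf
  have hint : Integrable (fun x => (exp (Δ x) - 1) ^ 2 * q x) μ := by
    refine (hK.const_mul ((γ / δ) ^ 2)).mono' ?_ (Filter.Eventually.of_forall fun x => ?_)
    · exact ((measurable_exp.comp_aemeasurable hΔ).sub_const 1).pow_const 2
        |>.aestronglyMeasurable.mul hq
    · rw [Real.norm_eq_abs, abs_of_nonneg (mul_nonneg (sq_nonneg _) (hq0 x))]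
      exact hpt x
  refine ⟨hint, ?_⟩
  rw [← integral_const_mul]
  exact integral_mono hint (hK.const_mul _) hpt

section Gibbs

variable {dx dθ : ℕ} (U : EuclideanSpace ℝ (Fin dθ) → EuclideanSpace ℝ (Fin dx) → ℝ)

theorem gibbsDensity_nonneg (t : EuclideanSpace ℝ (Fin dθ)) (x : EuclideanSpace ℝ (Fin dx)) :
    0 ≤ gibbsDensity U t x :=
  div_nonneg (exp_pos _).le (integral_nonneg fun _ => (exp_pos _).le)

theorem integrable_gibbsDensity {t : EuclideanSpace ℝ (Fin dθ)}
    (hZ : Integrable fun x => exp (-U t x)) : Integrable (gibbsDensity U t) :=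
  hZ.div_const _

theorem integral_gibbsDensity {t : EuclideanSpace ℝ (Fin dθ)}
    (hZ : Integrable fun x => exp (-U t x)) : ∫ x, gibbsDensity U t x = 1 := by
  simp only [gibbsDensity, integral_div]
  exact div_self (integral_exp_pos hZ).ne'

theorem gibbsDensity_eq_reweight {s : EuclideanSpace ℝ (Fin dθ)}
    (hZ : Integrable fun x => exp (-U s x)) (t : EuclideanSpace ℝ (Fin dθ)) :
    gibbsDensity U t = fun x => exp (U s x - U t x) * gibbsDensity U s x /
      ∫ y, exp (U s y - U t y) * gibbsDensity U s y := by
  have hweight : ∀ x, exp (U s x - U t x) * gibbsDensity U s x =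
      exp (-U t x) / ∫ y, exp (-U s y) := fun x => by
    rw [gibbsDensity, mul_div_assoc', ← exp_add]
    ring_nf
  ext x
  simp only [hweight, integral_div]
  rw [div_div_div_cancel_right₀ (integral_exp_pos hZ).ne', gibbsDensity]

theorem chiSqDiv_gibbsDensity_le {s t : EuclideanSpace ℝ (Fin dθ)}
    (hZs : Integrable fun x => exp (-U s x)) (hZt : Integrable fun x => exp (-U t x))
    {M : EuclideanSpace ℝ (Fin dx) → ℝ} {γ δ : ℝ} (hM : ∀ x, 0 ≤ M x) (hδ : 0 < δ) (hγ : 0 ≤ γ)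
    (hγδ : γ ≤ δ) (hΔ : ∀ x, |U s x - U t x| ≤ γ * M x)
    (hK : Integrable fun x => exp (4 * δ * M x) * gibbsDensity U s x)
    (hsmall : (γ / δ) ^ 2 * ∫ x, exp (4 * δ * M x) * gibbsDensity U s x ≤ 1 / 4) :
    chiSqDiv (gibbsDensity U t) (gibbsDensity U s) ≤
      4 * ((γ / δ) ^ 2 * ∫ x, exp (4 * δ * M x) * gibbsDensity U s x) := by
  have hΔ_meas : AEMeasurable fun x => U s x - U t x :=
    (aemeasurable_of_integrable_exp_neg hZs).sub (aemeasurable_of_integrable_exp_neg hZt)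
  obtain ⟨hm₂, hm₂_le⟩ := integral_exp_sub_one_sq_mul_le (gibbsDensity_nonneg U s)
    (integrable_gibbsDensity U hZs).1 hΔ_meas hM hδ hγ hγδ hΔ hK
  rw [gibbsDensity_eq_reweight U hZs t]
  refine (chiSqDiv_reweight_le (gibbsDensity_nonneg U s) (integrable_gibbsDensity U hZs)
    (integral_gibbsDensity U hZs) (measurable_exp.comp_aemeasurable hΔ_meas).aestronglyMeasurable
    hm₂ (hm₂_le.trans hsmall)).trans ?_
  exact mul_le_mul_of_nonneg_left hm₂_le four_pos.le

end Gibbs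

theorem chi_square_divergence_bound_dominated_general
    {dx dθ : ℕ}
    (U : EuclideanSpace ℝ (Fin dθ) → EuclideanSpace ℝ (Fin dx) → ℝ)
    (hZ : ∀ t, Integrable fun x => Real.exp (-U t x))
    (hU2 : ∀ x, ContDiff ℝ 2 fun t => U t x)
    (ℓ : EuclideanSpace ℝ (Fin dθ) → ℝ)
    (θp : EuclideanSpace ℝ (Fin dθ))
    (r : ℝ) (hr : 0 < r)
    (S₁ : EuclideanSpace ℝ (Fin dx) → EuclideanSpace ℝ (Fin dθ))
    (S₂ : EuclideanSpace ℝ (Fin dx) → Matrix (Fin dθ) (Fin dθ) ℝ)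
    (hS₁_dom : ∀ x, ∀ t ∈ Metric.closedBall θp r, ∀ i,
      |gradient (fun s => U s x) t i| ≤ S₁ x i)
    (hexp : ∃ ε > (0 : ℝ), ∀ lam : EuclideanSpace ℝ (Fin dθ), ‖lam‖ < ε →
      Integrable (fun x => Real.exp (∑ i, lam i * S₁ x i) * gibbsDensity U θp x) ∧
      Integrable (fun x =>
        Real.exp (∑ i, ∑ j, lam i * S₂ x i j * lam j) * gibbsDensity U θp x)) :
    ∃ C : ℝ, ∀ᶠ γ in 𝓝[>] (0 : ℝ),
      chiSqDiv (gibbsDensity U (θp - γ • gradient ℓ θp)) (gibbsDensity U θp) ≤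
        Real.sqrt (γ ^ 2 * ∫ x, ⟪gradient ℓ θp, gradient (fun s => U s x) θp⟫ ^ 2 *
            gibbsDensity U θp x) + C * γ ^ ((3 : ℝ) / 2) := by
  obtain ⟨ε, hε, hmoments⟩ := hexp
  set g := gradient ℓ θp
  set M : EuclideanSpace ℝ (Fin dx) → ℝ := fun x => ∑ i, |g i| * S₁ x i
  have hM : ∀ x, 0 ≤ M x := fun x => Finset.sum_nonneg fun i _ => mul_nonneg (abs_nonneg _)
    ((abs_nonneg _).trans (hS₁_dom x θp (Metric.mem_closedBall_self hr.le) i))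
  obtain ⟨δ, hδ, hδr, hδε⟩ : ∃ δ > 0, ‖g‖ * δ < r ∧ ‖g‖ * δ < ε / 4 := by
    simpa only [lt_min_iff] using exists_pos_mul_lt (lt_min hr (by positivity : 0 < ε / 4)) ‖g‖
  have hK : Integrable fun x => exp (4 * δ * M x) * gibbsDensity U θp x :=
    integrable_exp_mul_sum_abs_mul (fun lam h => (hmoments lam h).1) g (by positivity)
      (by linarith)
  set K := ∫ x, exp (4 * δ * M x) * gibbsDensity U θp x
  have hK_nonneg : 0 ≤ K :=
    integral_nonneg fun x => mul_nonneg (exp_pos _).le (gibbsDensity_nonneg U θp x)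
  have hsmall : ∀ᶠ γ in 𝓝 (0 : ℝ), (γ / δ) ^ 2 * K < 1 / 4 :=
    (by fun_prop : Continuous fun γ : ℝ => (γ / δ) ^ 2 * K).continuousAt.eventually_lt
      continuousAt_const (by norm_num)
  refine ⟨4 * K / δ ^ 2, ?_⟩
  filter_upwards [Ioc_mem_nhdsGT (lt_min hδ one_pos), nhdsWithin_le_nhds hsmall]
    with γ ⟨hγ0, hγ1⟩ hγK
  have hγδ : γ ≤ δ := hγ1.trans (min_le_left _ _)
  have hΔ : ∀ x, |U θp x - U (θp - γ • g) x| ≤ γ * M x := fun x => by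
    rw [abs_sub_comm]
    exact abs_sub_smul_sub_le_of_abs_gradient_le ((hU2 x).differentiable two_ne_zero)
      (hS₁_dom x) hγ0.le (by nlinarith [norm_nonneg g])
  calc _ ≤ 4 * ((γ / δ) ^ 2 * K) :=
        chiSqDiv_gibbsDensity_le U (hZ θp) (hZ _) hM hδ hγ0.le hγδ hΔ hK hγK.le
    _ = 4 * K / δ ^ 2 * γ ^ 2 := by ring
    _ ≤ 4 * K / δ ^ 2 * γ ^ ((3 : ℝ) / 2) := by
        gcongr
        rw [← Real.rpow_two]
        exact Real.rpow_le_rpow_of_exponent_ge hγ0 (hγ1.trans (min_le_right _ _)) (by norm_num)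
    _ ≤ _ := le_add_of_nonneg_left (Real.sqrt_nonneg _)

/-- Chi-square bound under locally dominated gradient/Hessian with exponential moments:
`χ²(π_{θ_k} ‖ π_{θ_{k−1}}) ≤ √(γ² ∇ℓᵀ I ∇ℓ) + O(γ^{3/2})` as `γ → 0⁺`. -/
theorem chi_square_divergence_bound_dominated
    {dx dθ : ℕ}
    (U : EuclideanSpace ℝ (Fin dθ) → EuclideanSpace ℝ (Fin dx) → ℝ)
    (hZ : ∀ t, Integrable fun x => Real.exp (-U t x))
    (hU2 : ∀ x, ContDiff ℝ 2 fun t => U t x)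
    (ℓ : EuclideanSpace ℝ (Fin dθ) → ℝ) (hℓ : Differentiable ℝ ℓ)
    (θp : EuclideanSpace ℝ (Fin dθ)) (Lc : ℝ)
    (hLc : ‖gradient ℓ θp‖ = Lc)
    (r : ℝ) (hr : 0 < r)
    (S₁ : EuclideanSpace ℝ (Fin dx) → EuclideanSpace ℝ (Fin dθ))
    (S₂ : EuclideanSpace ℝ (Fin dx) → Matrix (Fin dθ) (Fin dθ) ℝ)
    (hS₁_meas : Measurable S₁) (hS₂_meas : ∀ i j, Measurable fun x => S₂ x i j)
    (hS₂_symm : ∀ x, (S₂ x).IsSymm)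
    (hS₁_dom : ∀ x, ∀ t ∈ Metric.closedBall θp r, ∀ i,
      |gradient (fun s => U s x) t i| ≤ S₁ x i)
    (hS₂_dom : ∀ x, ∀ t ∈ Metric.closedBall θp r, ∀ v : EuclideanSpace ℝ (Fin dθ),
      ⟪v, fderiv ℝ (fun s => gradient (fun s' => U s' x) s) t v⟫ ≤
        ∑ i, ∑ j, v i * S₂ x i j * v j)
    (hexp : ∃ ε > (0 : ℝ), ∀ lam : EuclideanSpace ℝ (Fin dθ), ‖lam‖ < ε →
      Integrable (fun x => Real.exp (∑ i, lam i * S₁ x i) * gibbsDensity U θp x) ∧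
      Integrable (fun x =>
        Real.exp (∑ i, ∑ j, lam i * S₂ x i j * lam j) * gibbsDensity U θp x)) :
    ∃ C : ℝ, ∀ᶠ γ in 𝓝[>] (0 : ℝ),
      chiSqDiv (gibbsDensity U (θp - γ • gradient ℓ θp)) (gibbsDensity U θp) ≤
        Real.sqrt (γ ^ 2 * ∫ x, ⟪gradient ℓ θp, gradient (fun s => U s x) θp⟫ ^ 2 *
            gibbsDensity U θp x) + C * γ ^ ((3 : ℝ) / 2) :=
  chi_square_divergence_bound_dominated_general U hZ hU2 ℓ θp r hr S₁ S₂ hS₁_dom hexp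
end
end

section
/- Let Σ be a symmetric positive-definite d×d real matrix and suppose π_θ is the Gaussian density N(θ, Σ) on ℝ^d for θ ∈ ℝ^d. Let ℓ: ℝ^d → ℝ be differentiable, γ > 0, θ_k = θ_{k−1} − γ∇ℓ(θ_{k−1}), and define for N ∈ ℕ the limiting effective sample size ESS_k^∞(γ) = N / (1 + χ²(π_{θ_k} ‖ π_{θ_{k−1}})). Then ESS_k^∞(γ) = N · exp(−γ² ‖∇ℓ(θ_{k−1})‖²_{Σ^{−1}}), where ‖v‖²_{Σ^{−1}} = vᵀΣ^{−1}v. -/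
open MeasureTheory

noncomputable section

/-- Density of the multivariate Gaussian `N(μ, Σ)` on `ℝ^d`. -/
def gaussDensity {d : ℕ} (S : Matrix (Fin d) (Fin d) ℝ)
    (μ : EuclideanSpace ℝ (Fin d)) (x : EuclideanSpace ℝ (Fin d)) : ℝ :=
  (2 * Real.pi) ^ (-(d : ℝ) / 2) * S.det ^ (-(1 : ℝ) / 2) *
    Real.exp (-(1 / 2) * ∑ i, ∑ j, (x i - μ i) * S⁻¹ i j * (x j - μ j))

/-
The ratio of two Gaussian densities with the same covariance `Σ` is the exponential of an affine
function, and by the parallelogram law for `Q(v) = vᵀ Σ⁻¹ v`,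
`p_{μ₁}² / p_{μ₀} = exp (Q (μ₁ - μ₀)) · p_{2μ₁ - μ₀}`.
Since Gaussian densities integrate to one (write `Σ⁻¹ = BᵀB` and substitute `y = Bx`),
`χ²(p_{μ₁} ‖ p_{μ₀}) = ∫ p_{μ₁}² / p_{μ₀} - 1 = exp (Q (μ₁ - μ₀)) - 1`.
For the gradient step `μ₁ - μ₀ = -γ ∇ℓ(θ)`, so `1 + χ² = exp (γ² Q (∇ℓ(θ)))`.
-/

open Matrix Real WithLp

section ChiSquare

variable {α : Type*} [MeasurableSpace α]

def chiSquare (p q : α → ℝ) (μ : Measure α) : ℝ :=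
  ∫ x, (p x / q x - 1) ^ 2 * q x ∂μ

theorem chiSquare_eq_integral_sq_div_sub_one {μ : Measure α} {p q : α → ℝ}
    (hq₀ : ∀ᵐ x ∂μ, q x ≠ 0) (hp : Integrable p μ) (hq : Integrable q μ)
    (hpq : Integrable (fun x => p x ^ 2 / q x) μ) (hp₁ : ∫ x, p x ∂μ = 1)
    (hq₁ : ∫ x, q x ∂μ = 1) :
    chiSquare p q μ = ∫ x, p x ^ 2 / q x ∂μ - 1 := by
  have hexpand : (fun x => (p x / q x - 1) ^ 2 * q x) =ᵐ[μ]
      fun x => p x ^ 2 / q x - 2 * p x + q x := by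
    filter_upwards [hq₀] with x hx
    field_simp
    ring
  have hp₂ : Integrable (fun x => 2 * p x) μ := hp.const_mul 2
  rw [chiSquare, integral_congr_ae hexpand, integral_add (by exact hpq.sub hp₂) hq,
    integral_sub hpq hp₂, integral_const_mul, hp₁, hq₁]
  ring

end ChiSquare

section ChangeOfVariables

variable {E F : Type*} [NormedAddCommGroup E] [NormedSpace ℝ E] [FiniteDimensional ℝ E]
  [MeasurableSpace E] [BorelSpace E] [NormedAddCommGroup F] [NormedSpace ℝ F]

theorem integral_comp_linearMap (μ : Measure E) [μ.IsAddHaarMeasure] {L : E →ₗ[ℝ] E}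
    (hL : LinearMap.det L ≠ 0) (f : E → F) :
    ∫ x, f (L x) ∂μ = |(LinearMap.det L)⁻¹| • ∫ x, f x ∂μ := by
  have hinj : Function.Injective L :=
    ((Module.End.isUnit_iff L).1 ((LinearMap.isUnit_iff_isUnit_det L).2 hL.isUnit)).1
  have hL_emb : MeasurableEmbedding L :=
    (L.isClosedEmbedding_of_injective (LinearMap.ker_eq_bot.2 hinj)).measurableEmbedding
  rw [← hL_emb.integral_map, Measure.map_linearMap_addHaar_eq_smul_addHaar μ hL,
    integral_smul_measure, ENNReal.toReal_ofReal (abs_nonneg _)]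

end ChangeOfVariables

section QuadForm

variable {ι : Type*} [Fintype ι] (A : Matrix ι ι ℝ)

def quadForm (v : EuclideanSpace ℝ ι) : ℝ :=
  ofLp v ⬝ᵥ A *ᵥ ofLp v

theorem quadForm_eq_sum (v : EuclideanSpace ℝ ι) :
    quadForm A v = ∑ i, ∑ j, v i * A i j * v j := by
  simp [quadForm, dotProduct, mulVec, Finset.mul_sum, mul_assoc]

theorem quadForm_add_add_quadForm_sub (u v : EuclideanSpace ℝ ι) :
    quadForm A (u + v) + quadForm A (u - v) = 2 * quadForm A u + 2 * quadForm A v := by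
  simp only [quadForm, ofLp_add, ofLp_sub, add_dotProduct, sub_dotProduct, mulVec_add,
    mulVec_sub, dotProduct_add, dotProduct_sub]
  ring

theorem quadForm_smul (c : ℝ) (v : EuclideanSpace ℝ ι) :
    quadForm A (c • v) = c ^ 2 * quadForm A v := by
  simp only [quadForm, ofLp_smul, mulVec_smul, smul_dotProduct, dotProduct_smul, smul_eq_mul]
  ring

variable {A} in
theorem integral_exp_neg_half_quadForm [DecidableEq ι] (hA : A.PosDef) :
    ∫ x, exp (-(1 / 2) * quadForm A x)
      = (2 * π) ^ (Fintype.card ι / 2 : ℝ) * A.det ^ (-(1 / 2) : ℝ) := by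
  open scoped MatrixOrder in
  obtain ⟨B, rfl⟩ := CStarAlgebra.nonneg_iff_eq_star_mul_self.1 hA.posSemidef.nonneg
  have hdet : (star B * B).det = B.det ^ 2 := by
    rw [det_mul, star_eq_conjTranspose, det_conjTranspose, star_trivial, sq]
  have hB : B.det ≠ 0 := fun h => hA.det_pos.ne' (by rw [hdet, h]; ring)
  have hnorm : ∀ x, quadForm (star B * B) x = ‖toEuclideanLin B x‖ ^ 2 := by
    intro x
    rw [quadForm, EuclideanSpace.real_norm_sq_eq, ← mulVec_mulVec, dotProduct_mulVec,
      star_eq_conjTranspose, vecMul_conjTranspose, star_trivial]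
    simp [dotProduct, sq]
  have hdetL : LinearMap.det (toEuclideanLin B : _ →ₗ[ℝ] _) = B.det :=
    LinearMap.det_toLin (EuclideanSpace.basisFun ι ℝ).toBasis B
  simp_rw [hnorm]
  rw [integral_comp_linearMap volume (f := fun y => exp (-(1 / 2) * ‖y‖ ^ 2)) (hdetL ▸ hB),
    GaussianFourier.integral_rexp_neg_mul_sq_norm (by norm_num), finrank_euclideanSpace, hdetL,
    hdet, smul_eq_mul, rpow_neg (sq_nonneg _), ← sqrt_eq_rpow, sqrt_sq_eq_abs, abs_inv, mul_comm,
    div_div_eq_mul_div, div_one, mul_comm π]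

end QuadForm

section GaussDensity

variable {d : ℕ} (S : Matrix (Fin d) (Fin d) ℝ)

theorem gaussDensity_eq_mul_exp (μ x : EuclideanSpace ℝ (Fin d)) :
    gaussDensity S μ x = (2 * π) ^ (-(d : ℝ) / 2) * S.det ^ (-(1 : ℝ) / 2) *
      exp (-(1 / 2) * quadForm S⁻¹ (x - μ)) := by
  simp [gaussDensity, quadForm_eq_sum]

theorem gaussDensity_pos {S} (hS : S.PosDef) (μ x : EuclideanSpace ℝ (Fin d)) :
    0 < gaussDensity S μ x := by
  have := rpow_pos_of_pos hS.det_pos (-(1 : ℝ) / 2)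
  unfold gaussDensity
  positivity

theorem integral_gaussDensity {S} (hS : S.PosDef) (μ : EuclideanSpace ℝ (Fin d)) :
    ∫ x, gaussDensity S μ x = 1 := by
  simp_rw [gaussDensity_eq_mul_exp]
  rw [integral_const_mul, integral_sub_right_eq_self (fun x => exp (-(1 / 2) * quadForm S⁻¹ x)),
    integral_exp_neg_half_quadForm hS.inv, det_nonsing_inv, Ring.inverse_eq_inv',
    Fintype.card_fin, inv_rpow hS.det_pos.le, ← rpow_neg hS.det_pos.le]
  have h2π : 0 < (2 * π) ^ (d / 2 : ℝ) := by positivity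
  have hdet : 0 < S.det ^ (1 / 2 : ℝ) := rpow_pos_of_pos hS.det_pos _
  rw [neg_div, neg_div, rpow_neg (by positivity), rpow_neg hS.det_pos.le, neg_neg]
  field_simp

theorem integrable_gaussDensity {S} (hS : S.PosDef) (μ : EuclideanSpace ℝ (Fin d)) :
    Integrable (gaussDensity S μ) :=
  .of_integral_ne_zero (by rw [integral_gaussDensity hS]; exact one_ne_zero)

theorem sq_gaussDensity_div (μ₀ μ₁ x : EuclideanSpace ℝ (Fin d)) :
    gaussDensity S μ₁ x ^ 2 / gaussDensity S μ₀ x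
      = exp (quadForm S⁻¹ (μ₁ - μ₀)) * gaussDensity S (μ₁ + (μ₁ - μ₀)) x := by
  have hpar := quadForm_add_add_quadForm_sub S⁻¹ (x - μ₁) (μ₁ - μ₀)
  rw [sub_add_sub_cancel, sub_sub] at hpar
  simp only [gaussDensity_eq_mul_exp]
  generalize (2 * π) ^ (-(d : ℝ) / 2) * S.det ^ (-(1 : ℝ) / 2) = c
  rcases eq_or_ne c 0 with rfl | hc
  · simp
  rw [div_eq_iff (by positivity), mul_pow, sq (exp _), ← exp_add]
  field_simp
  rw [← exp_add, ← exp_add]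
  congr 1
  linarith

theorem chiSquare_gaussDensity {S} (hS : S.PosDef) (μ₀ μ₁ : EuclideanSpace ℝ (Fin d)) :
    chiSquare (gaussDensity S μ₁) (gaussDensity S μ₀) volume
      = exp (quadForm S⁻¹ (μ₁ - μ₀)) - 1 := by
  rw [chiSquare_eq_integral_sq_div_sub_one (ae_of_all _ fun x => (gaussDensity_pos hS μ₀ x).ne')
    (integrable_gaussDensity hS μ₁) (integrable_gaussDensity hS μ₀) ?_
    (integral_gaussDensity hS μ₁) (integral_gaussDensity hS μ₀)]
  · simp_rw [sq_gaussDensity_div]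
    rw [integral_const_mul, integral_gaussDensity hS, mul_one]
  · simp_rw [sq_gaussDensity_div]
    exact (integrable_gaussDensity hS _).const_mul _

end GaussDensity

theorem gaussian_limiting_ess_general
    {d : ℕ} (S : Matrix (Fin d) (Fin d) ℝ) (hS : S.PosDef)
    (ℓ : EuclideanSpace ℝ (Fin d) → ℝ)
    (θp : EuclideanSpace ℝ (Fin d))
    (γ : ℝ) (N : ℕ) :
    (N : ℝ) /
        (1 + ∫ x, (gaussDensity S (θp - γ • gradient ℓ θp) x / gaussDensity S θp x - 1) ^ 2 *
          gaussDensity S θp x)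
      = (N : ℝ) * Real.exp (-(γ ^ 2 *
          ∑ i, ∑ j, gradient ℓ θp i * S⁻¹ i j * gradient ℓ θp j)) := by
  change (N : ℝ) / (1 + chiSquare (gaussDensity S (θp - γ • gradient ℓ θp))
    (gaussDensity S θp) volume) = _
  rw [chiSquare_gaussDensity hS, sub_sub_cancel_left, ← neg_smul, quadForm_smul, neg_sq,
    quadForm_eq_sum, add_sub_cancel, div_eq_mul_inv, ← exp_neg]

/-- Limiting effective sample size for Gaussian targets `π_θ = N(θ,Σ)` along a gradient
step `θ_k = θ_{k−1} − γ∇ℓ(θ_{k−1})`: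
`ESS_k^∞(γ) = N/(1 + χ²(π_{θ_k} ‖ π_{θ_{k−1}})) = N exp(−γ²‖∇ℓ(θ_{k−1})‖²_{Σ⁻¹})`. -/
theorem gaussian_limiting_ess
    {d : ℕ} (S : Matrix (Fin d) (Fin d) ℝ) (hS : S.PosDef)
    (ℓ : EuclideanSpace ℝ (Fin d) → ℝ)
    (θp : EuclideanSpace ℝ (Fin d))
    (hℓ : DifferentiableAt ℝ ℓ θp)
    (γ : ℝ) (hγ : 0 < γ) (N : ℕ) :
    (N : ℝ) /
        (1 + ∫ x, (gaussDensity S (θp - γ • gradient ℓ θp) x / gaussDensity S θp x - 1) ^ 2 *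
          gaussDensity S θp x)
      = (N : ℝ) * Real.exp (-(γ ^ 2 *
          ∑ i, ∑ j, gradient ℓ θp i * S⁻¹ i j * gradient ℓ θp j)) :=
  gaussian_limiting_ess_general S hS ℓ θp γ N
end
end
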